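/- arXiv:1809.08583 — 7 statements merged into one kernel-verified Lean document; each statement's English description precedes it below -/
import Mathlib

section
/- Let (Y, d_Y) be a complete metric space and let ζ : Y → ℝ be a continuous non-negative function. Then for every y ∈ Y there exist a point y' ∈ Y and a real number ρ with 0 < ρ ≤ 1 such that d_Y(y, y') ≤ 1, sup_{y'' ∈ B(y', ρ)} ζ(y'') ≤ 2 ζ(y'), and 2 ρ ζ(y') ≥ ζ(y). -/
/-- Point-choosing lemma (Lemma 9.3 of Dostoglou–Salamon): in a complete metric
space, given a continuous nonnegative function `ζ` and a point `y`, there exist a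
point `y'` with `dist y y' ≤ 1` and a radius `0 < ρ ≤ 1` such that `ζ ≤ 2 ζ y'`
on the open ball `B(y', ρ)` and `2 ρ ζ y' ≥ ζ y`. -/
theorem point_choosing_lemma {Y : Type*} [MetricSpace Y] [CompleteSpace Y]
    (ζ : Y → ℝ) (hcont : Continuous ζ) (hnonneg : ∀ x, 0 ≤ ζ x) (y : Y) :
    ∃ (y' : Y) (ρ : ℝ), 0 < ρ ∧ ρ ≤ 1 ∧ dist y y' ≤ 1 ∧
      (∀ y'' ∈ Metric.ball y' ρ, ζ y'' ≤ 2 * ζ y') ∧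
      ζ y ≤ 2 * ρ * ζ y' := by
  obtain ⟨ρ, hρpos, y', hρle, hdist, hmul, hball⟩ :=
    hofer y (1/2) (by norm_num) hcont hnonneg
  refine ⟨y', ρ, hρpos, by linarith, by rw [dist_comm] at hdist; linarith, ?_, ?_⟩
  · intro y'' hy''
    exact hball y'' (le_of_lt (by simpa [dist_comm] using hy''))
  · linarith
end

section
/- Fix real numbers δ > 0, M > 0, R > 0 and 0 < r < R. Then there exist constants C > 0 and t₀ ∈ (0, 1] such that the following holds: for every t ∈ (0, t₀] and every function ζ that is continuous and non-negative on the closed disk {w ∈ ℂ : |w| ≤ R}, twice continuously differentiable on the open disk U = {w ∈ ℂ : |w| < R}, bounded above by M, and satisfies the differential inequality Δζ ≥ (δ/t) ζ − t at every point of U, one has ζ(w₀) ≤ C t² for every w₀ ∈ ℂ with |w₀| ≤ R − r. -/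
/-!
Comparison with the barrier `φ = (t²/2) (cosh (l (x - x₀)) + cosh (l (y - y₀)))`, where
`l = √(δ/t)`, so that `Δφ = (δ/t) φ`. The function `u = ζ - t²/δ - φ` then satisfies
`Δu ≥ (δ/t) u`, so it cannot have a positive interior maximum on the disk of radius `r` about
`w₀`; on the boundary circle `φ ≥ M ≥ ζ` as soon as `t ≲ δ³ r⁶ / M`, because
`cosh s ≥ s⁶ / 1440`. Hence `u ≤ 0` on the disk and `ζ(w₀) ≤ t²/δ + φ(w₀) = (1/δ + 1) t²`.
-/

open Filter Topology Metric Real Laplacian InnerProductSpace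

theorem IsLocalMax.nonpos_of_hasDerivAt_hasDerivAt {f f' : ℝ → ℝ} {a c : ℝ} (h : IsLocalMax f a)
    (hf : ∀ᶠ x in 𝓝 a, HasDerivAt f (f' x) x) (hf' : HasDerivAt f' c a) : c ≤ 0 := by
  have hderiv : deriv f =ᶠ[𝓝 a] f' := hf.mono fun x hx => hx.deriv
  by_contra! hc
  -- a local maximum with `f'' > 0` is also a local minimum, so `f` is locally constant
  have hmin : IsLocalMin f a :=
    isLocalMin_of_deriv_deriv_pos (by rwa [hderiv.deriv_eq, hf'.deriv])
      (by rw [hderiv.eq_of_nhds]; exact h.hasDerivAt_eq_zero hf.self_of_nhds)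
      hf.self_of_nhds.continuousAt
  have hconst : f =ᶠ[𝓝 a] fun _ => f a := (h.and hmin).mono fun x hx => le_antisymm hx.1 hx.2
  have hzero : f' =ᶠ[𝓝 a] fun _ => 0 := by
    filter_upwards [hconst.eventually_nhds, hf] with x hx hfx
    exact hfx.unique ((hasDerivAt_const x (f a)).congr_of_eventuallyEq hx)
  exact hc.ne' (hf'.unique ((hasDerivAt_const a 0).congr_of_eventuallyEq hzero))

theorem IsLocalMax.fderiv_fderiv_apply_self_nonpos {E : Type*} [NormedAddCommGroup E]
    [NormedSpace ℝ E] {f : E → ℝ} {w : E} (h : IsLocalMax f w) (hf : ContDiffAt ℝ 2 f w) (v : E) :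
    fderiv ℝ (fderiv ℝ f) w v v ≤ 0 := by
  set γ : ℝ → E := fun s => w + s • v
  have hγ : ∀ s, HasDerivAt γ v s := fun s =>
    (((hasDerivAt_id s).smul_const v).const_add w).congr_deriv (one_smul ℝ v)
  have hγ0 : γ 0 = w := by simp [γ]
  have htendsto : Tendsto γ (𝓝 0) (𝓝 w) := hγ0 ▸ (hγ 0).continuousAt.tendsto
  have hdiff : ∀ᶠ z in 𝓝 w, DifferentiableAt ℝ f z :=
    (hf.eventually (by simp)).mono fun z hz => hz.differentiableAt (by simp)
  have hdiff2 : DifferentiableAt ℝ (fderiv ℝ f) w :=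
    (hf.fderiv_right le_rfl).differentiableAt one_ne_zero
  have hmax : IsLocalMax (f ∘ γ) 0 :=
    (hγ0 ▸ h : IsLocalMax f (γ 0)).comp_continuous (hγ 0).continuousAt
  refine hmax.nonpos_of_hasDerivAt_hasDerivAt (f' := fun s => fderiv ℝ f (γ s) v) ?_ ?_
  · filter_upwards [htendsto.eventually hdiff] with s hs
    exact hs.hasFDerivAt.comp_hasDerivAt s (hγ s)
  · have hv := (hdiff2.clm_apply (differentiableAt_const v)).hasFDerivAt
    simpa [fderiv_clm_apply hdiff2, Function.comp_def] using
      hv.comp_hasDerivAt_of_eq 0 (hγ 0) hγ0.symm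

section MaximumPrinciple

variable {E : Type*} [NormedAddCommGroup E] [InnerProductSpace ℝ E] [FiniteDimensional ℝ E]

theorem IsLocalMax.laplacian_nonpos {f : E → ℝ} {w : E} (h : IsLocalMax f w)
    (hf : ContDiffAt ℝ 2 f w) : Δ f w ≤ 0 := by
  rw [laplacian_eq_iteratedFDeriv_stdOrthonormalBasis]
  exact Finset.sum_nonpos fun i _ => by
    simpa [iteratedFDeriv_two_apply] using h.fderiv_fderiv_apply_self_nonpos hf _

theorem nonpos_on_closedBall_of_mul_le_laplacian {u : E → ℝ} {c : E} {r k : ℝ} (hk : 0 < k)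
    (hcont : ContinuousOn u (closedBall c r)) (hu : ContDiffOn ℝ 2 u (ball c r))
    (hsphere : ∀ x ∈ sphere c r, u x ≤ 0) (hΔ : ∀ x ∈ ball c r, k * u x ≤ Δ u x) :
    ∀ x ∈ closedBall c r, u x ≤ 0 := by
  intro x hx
  by_contra! hux
  obtain ⟨y, hy, hymax⟩ := (isCompact_closedBall c r).exists_isMaxOn ⟨x, hx⟩ hcont
  have huy : 0 < u y := hux.trans_le (hymax hx)
  have hy_ball : y ∈ ball c r :=
    (mem_closedBall.1 hy).lt_of_ne fun hyr => (hsphere y hyr).not_gt huy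
  have hy_nhds : ball c r ∈ 𝓝 y := isOpen_ball.mem_nhds hy_ball
  have hΔy := (hymax.isLocalMax (mem_of_superset hy_nhds ball_subset_closedBall)).laplacian_nonpos
    (hu.contDiffAt hy_nhds)
  nlinarith [hΔ y hy_ball]

end MaximumPrinciple

theorem laplacian_eq_fderiv_fderiv_one_add_fderiv_fderiv_I {F : Type*} [NormedAddCommGroup F]
    [NormedSpace ℝ F] {f : ℂ → F} {w : ℂ} (hf : DifferentiableAt ℝ (fderiv ℝ f) w) :
    Δ f w = fderiv ℝ (fun z => fderiv ℝ f z 1) w 1 +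
      fderiv ℝ (fun z => fderiv ℝ f z Complex.I) w Complex.I := by
  simp [laplacian_eq_iteratedFDeriv_complexPlane, iteratedFDeriv_two_apply, fderiv_clm_apply hf]

theorem hasFDerivAt_comp_re {g : ℝ → ℝ} {g' : ℝ} {z : ℂ} (hg : HasDerivAt g g' z.re) :
    HasFDerivAt (fun z : ℂ => g z.re) (g' • Complex.reCLM) z :=
  hg.comp_hasFDerivAt z Complex.reCLM.hasFDerivAt

theorem hasFDerivAt_comp_im {g : ℝ → ℝ} {g' : ℝ} {z : ℂ} (hg : HasDerivAt g g' z.im) :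
    HasFDerivAt (fun z : ℂ => g z.im) (g' • Complex.imCLM) z :=
  hg.comp_hasFDerivAt z Complex.imCLM.hasFDerivAt

theorem laplacian_comp_re_add_comp_im {g h : ℝ → ℝ} (hg : ContDiff ℝ 2 g) (hh : ContDiff ℝ 2 h)
    (w : ℂ) :
    Δ (fun z : ℂ => g z.re + h z.im) w = deriv (deriv g) w.re + deriv (deriv h) w.im := by
  have hg' : Differentiable ℝ (deriv g) := (hg.iterate_deriv' 1 1).differentiable one_ne_zero
  have hh' : Differentiable ℝ (deriv h) := (hh.iterate_deriv' 1 1).differentiable one_ne_zero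
  have hfd : fderiv ℝ (fun z : ℂ => g z.re + h z.im) =
      fun z => deriv g z.re • Complex.reCLM + deriv h z.im • Complex.imCLM := by
    ext1 z
    exact ((hasFDerivAt_comp_re (hg.differentiable two_ne_zero _).hasDerivAt).add
      (hasFDerivAt_comp_im (hh.differentiable two_ne_zero _).hasDerivAt)).fderiv
  rw [laplacian_eq_fderiv_fderiv_one_add_fderiv_fderiv_I (by rw [hfd]; fun_prop), hfd]
  simp only [add_apply, smul_apply, Complex.reCLM_apply, Complex.imCLM_apply,
    Complex.one_re, Complex.one_im, Complex.I_re, Complex.I_im, smul_eq_mul, mul_one, mul_zero,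
    add_zero, zero_add]
  rw [(hasFDerivAt_comp_re (hg' _).hasDerivAt).fderiv,
    (hasFDerivAt_comp_im (hh' _).hasDerivAt).fderiv]
  simp

theorem deriv_deriv_cosh_mul_sub (l a x : ℝ) :
    deriv (deriv fun x => cosh (l * (x - a))) x = l ^ 2 * cosh (l * (x - a)) := by
  have hlin : ∀ x, HasDerivAt (fun x => l * (x - a)) l x := fun x => by
    simpa using ((hasDerivAt_id x).sub_const a).const_mul l
  have hcosh : deriv (fun x => cosh (l * (x - a))) = fun x => sinh (l * (x - a)) * l :=
    funext fun x => (hlin x).cosh.deriv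
  rw [hcosh, ((hlin x).sinh.mul_const l).deriv]
  ring

theorem Real.abs_pow_div_factorial_le_two_mul_cosh (x : ℝ) (n : ℕ) :
    |x| ^ n / n.factorial ≤ 2 * cosh x := by
  rw [← cosh_abs, cosh_eq]
  linarith [pow_div_factorial_le_exp _ (abs_nonneg x) n, exp_pos (-|x|)]

noncomputable def coshBarrier (l : ℝ) (c z : ℂ) : ℝ :=
  cosh (l * (z.re - c.re)) + cosh (l * (z.im - c.im))

theorem contDiff_coshBarrier (l : ℝ) (c : ℂ) : ContDiff ℝ 2 (coshBarrier l c) := by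
  have hre : ContDiff ℝ 2 Complex.re := Complex.reCLM.contDiff
  have him : ContDiff ℝ 2 Complex.im := Complex.imCLM.contDiff
  unfold coshBarrier
  fun_prop

theorem laplacian_coshBarrier (l : ℝ) (c z : ℂ) :
    Δ (coshBarrier l c) z = l ^ 2 * coshBarrier l c z := by
  have h := laplacian_comp_re_add_comp_im (g := fun x => cosh (l * (x - c.re)))
    (h := fun y => cosh (l * (y - c.im))) (by fun_prop) (by fun_prop) z
  rw [deriv_deriv_cosh_mul_sub, deriv_deriv_cosh_mul_sub] at h
  rw [coshBarrier, mul_add]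
  exact h

theorem coshBarrier_self (l : ℝ) (c : ℂ) : coshBarrier l c c = 2 := by
  norm_num [coshBarrier]

theorem pow_six_div_le_coshBarrier (l : ℝ) (c z : ℂ) :
    (l * ‖z - c‖) ^ 6 / 5760 ≤ coshBarrier l c z := by
  have hnorm : ‖z - c‖ ^ 2 = (z.re - c.re) ^ 2 + (z.im - c.im) ^ 2 := by
    rw [Complex.sq_norm, Complex.normSq_apply]; simp; ring
  have hcosh : ∀ u : ℝ, u ^ 6 / 1440 ≤ cosh u := fun u => by
    have := abs_pow_div_factorial_le_two_mul_cosh u 6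
    rw [Even.pow_abs (by decide)] at this
    norm_num [Nat.factorial] at this
    linarith
  have hmean := add_pow_le (sq_nonneg (z.re - c.re)) (sq_nonneg (z.im - c.im)) 3
  norm_num at hmean
  have hx := hcosh (l * (z.re - c.re))
  have hy := hcosh (l * (z.im - c.im))
  rw [mul_pow, show ‖z - c‖ ^ 6 = (‖z - c‖ ^ 2) ^ 3 by ring, hnorm, coshBarrier]
  have hl : 0 ≤ l ^ 6 := by positivity
  nlinarith [mul_le_mul_of_nonneg_left hmean hl]

theorem le_sq_div_two_mul_coshBarrier {δ M r t : ℝ} (hδ : 0 ≤ δ) (ht : 0 < t)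
    (htM : 11520 * M * t ≤ δ ^ 3 * r ^ 6) {c z : ℂ} (hz : ‖z - c‖ = r) :
    M ≤ t ^ 2 / 2 * coshBarrier √(δ / t) c z := by
  have hl : √(δ / t) ^ 2 = δ / t := sq_sqrt (by positivity)
  calc M ≤ δ ^ 3 * r ^ 6 / (11520 * t) := by rw [le_div_iff₀ (by positivity)]; linarith
    _ = t ^ 2 / 2 * ((√(δ / t) * r) ^ 6 / 5760) := by
      rw [mul_pow, show √(δ / t) ^ 6 = (√(δ / t) ^ 2) ^ 3 by ring, hl]
      field_simp
      ring
    _ ≤ t ^ 2 / 2 * coshBarrier √(δ / t) c z := by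
      rw [← hz]
      gcongr
      exact pow_six_div_le_coshBarrier _ c z

theorem apply_center_le_of_laplacian_ge {ζ : ℂ → ℝ} {c : ℂ} {δ M r t : ℝ} (hδ : 0 < δ)
    (ht : 0 < t) (hr : 0 ≤ r) (htM : 11520 * M * t ≤ δ ^ 3 * r ^ 6)
    (hcont : ContinuousOn ζ (closedBall c r)) (hζ : ContDiffOn ℝ 2 ζ (ball c r))
    (hM : ∀ z ∈ sphere c r, ζ z ≤ M) (hΔ : ∀ z ∈ ball c r, δ / t * ζ z - t ≤ Δ ζ z) :
    ζ c ≤ (1 / δ + 1) * t ^ 2 := by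
  set l := √(δ / t)
  have hl : l ^ 2 = δ / t := sq_sqrt (by positivity)
  have hb : ContDiff ℝ 2 (coshBarrier l c) := contDiff_coshBarrier l c
  have hu := nonpos_on_closedBall_of_mul_le_laplacian
    (u := ζ - (fun _ => t ^ 2 / δ) - (t ^ 2 / 2) • coshBarrier l c) (k := δ / t) (by positivity)
    ((hcont.sub continuousOn_const).sub (hb.continuous.continuousOn.const_smul _))
    ((hζ.sub contDiffOn_const).sub (hb.contDiffOn.const_smul _)) ?sphere ?laplacian c
    (mem_closedBall_self hr)
  case sphere =>
    intro z hz
    have := le_sq_div_two_mul_coshBarrier hδ.le ht htM (by simpa [← dist_eq_norm] using hz)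
    simp only [Pi.sub_apply, Pi.smul_apply, smul_eq_mul]
    linarith [hM z hz, show 0 < t ^ 2 / δ by positivity]
  case laplacian =>
    intro z hz
    have hζz : ContDiffAt ℝ 2 ζ z := hζ.contDiffAt (isOpen_ball.mem_nhds hz)
    have hζz' : ContDiffAt ℝ 2 (ζ - fun _ => t ^ 2 / δ) z := hζz.sub contDiffAt_const
    have hφz : ContDiffAt ℝ 2 ((t ^ 2 / 2) • coshBarrier l c) z :=
      hb.contDiffAt.const_smul (t ^ 2 / 2)
    rw [hζz'.laplacian_sub hφz, hζz.laplacian_sub contDiffAt_const,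
      laplacian_const, laplacian_smul _ hb.contDiffAt, laplacian_coshBarrier, hl]
    have : δ / t * (t ^ 2 / δ) = t := by field_simp
    simp only [Pi.sub_apply, Pi.smul_apply, Pi.zero_apply, smul_eq_mul]
    linear_combination hΔ z hz - this
  simp only [Pi.sub_apply, Pi.smul_apply, smul_eq_mul, coshBarrier_self] at hu
  linarith [show (1 / δ + 1) * t ^ 2 = t ^ 2 / δ + t ^ 2 by ring]

theorem sup_bound_from_differential_inequality_general
    (δ M R r : ℝ) (hδ : 0 < δ) (hM : 0 < M) (hr : 0 < r) :
    ∃ (C t₀ : ℝ), 0 < C ∧ 0 < t₀ ∧ t₀ ≤ 1 ∧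
      ∀ t : ℝ, 0 < t → t ≤ t₀ →
      ∀ ζ : ℂ → ℝ,
        ContinuousOn ζ (Metric.closedBall (0 : ℂ) R) →
        ContDiffOn ℝ 2 ζ (Metric.ball (0 : ℂ) R) →
        (∀ w ∈ Metric.closedBall (0 : ℂ) R, 0 ≤ ζ w) →
        (∀ w ∈ Metric.closedBall (0 : ℂ) R, ζ w ≤ M) →
        (∀ w ∈ Metric.ball (0 : ℂ) R,
          (δ / t) * ζ w - t ≤
            fderiv ℝ (fun z => fderiv ℝ ζ z 1) w 1 +
              fderiv ℝ (fun z => fderiv ℝ ζ z Complex.I) w Complex.I) →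
        ∀ w₀ : ℂ, ‖w₀‖ ≤ R - r → ζ w₀ ≤ C * t ^ 2 := by
  refine ⟨1 / δ + 1, min 1 (δ ^ 3 * r ^ 6 / (11520 * M)), by positivity, by positivity,
    min_le_left _ _, fun t ht ht₀ ζ hcont hζ _ hbd hΔ w₀ hw₀ => ?_⟩
  have htM : 11520 * M * t ≤ δ ^ 3 * r ^ 6 := by
    have := ht₀.trans (min_le_right _ _)
    rw [le_div_iff₀ (by positivity)] at this
    linarith
  have hdist : r + dist w₀ 0 ≤ R := by rw [dist_zero_right]; linarith
  have hclosed : closedBall w₀ r ⊆ closedBall 0 R := closedBall_subset_closedBall' hdist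
  have hopen : ball w₀ r ⊆ ball 0 R := ball_subset_ball' hdist
  refine apply_center_le_of_laplacian_ge hδ ht hr.le htM (hcont.mono hclosed) (hζ.mono hopen)
    (fun z hz => hbd z (hclosed (sphere_subset_closedBall hz))) fun z hz => ?_
  have hζz : ContDiffAt ℝ 2 ζ z := hζ.contDiffAt (isOpen_ball.mem_nhds (hopen hz))
  rw [laplacian_eq_fderiv_fderiv_one_add_fderiv_fderiv_I
    ((hζz.fderiv_right le_rfl).differentiableAt one_ne_zero)]
  exact hΔ z (hopen hz)

/-- Lemma 6.4 of the paper: if a nonnegative bounded function `ζ` on a disk of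
radius `R` in `ℂ ≅ ℝ²` satisfies `Δζ ≥ (δ/t) ζ − t`, then on the concentric disk
of radius `R − r` one has `ζ ≤ C t²` for all sufficiently small `t`, where `C`
depends only on `δ`, `M`, `R`, `r`. The Laplacian is expressed through second
directional derivatives in the directions `1` and `I`. -/
theorem sup_bound_from_differential_inequality
    (δ M R r : ℝ) (hδ : 0 < δ) (hM : 0 < M) (hR : 0 < R) (hr : 0 < r) (hrR : r < R) :
    ∃ (C t₀ : ℝ), 0 < C ∧ 0 < t₀ ∧ t₀ ≤ 1 ∧
      ∀ t : ℝ, 0 < t → t ≤ t₀ →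
      ∀ ζ : ℂ → ℝ,
        ContinuousOn ζ (Metric.closedBall (0 : ℂ) R) →
        ContDiffOn ℝ 2 ζ (Metric.ball (0 : ℂ) R) →
        (∀ w ∈ Metric.closedBall (0 : ℂ) R, 0 ≤ ζ w) →
        (∀ w ∈ Metric.closedBall (0 : ℂ) R, ζ w ≤ M) →
        (∀ w ∈ Metric.ball (0 : ℂ) R,
          (δ / t) * ζ w - t ≤
            fderiv ℝ (fun z => fderiv ℝ ζ z 1) w 1 +
              fderiv ℝ (fun z => fderiv ℝ ζ z Complex.I) w Complex.I) →
        ∀ w₀ : ℂ, ‖w₀‖ ≤ R - r → ζ w₀ ≤ C * t ^ 2 :=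
  sup_bound_from_differential_inequality_general δ M R r hδ hM hr
end

section
/- Let d ≥ 1, let v₁, …, v_d be a basis of ℝ^d, set L = ‖v₁‖ + ⋯ + ‖v_d‖, and let ν ≥ 0 and k ≥ 1 be integers. Suppose ε ∈ (0, 1] and h : ℝ^d → ℝ is a smooth function that is periodic with respect to the scaled lattice ε(ℤv₁ + ⋯ + ℤv_d), i.e. h(x + ε vᵢ) = h(x) for all x ∈ ℝ^d and all i = 1, …, d, and suppose sup_{ℝ^d} ‖D^{k+ν} h‖ ≤ C₀ for some constant C₀ > 0. Then sup_{ℝ^d} ‖D^{k} h‖ ≤ L^{ν} C₀ ε^{ν}. -/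
variable {E F : Type*} [NormedAddCommGroup E] [NormedSpace ℝ E]
  [NormedAddCommGroup F] [NormedSpace ℝ F]

/-- fderiv of a periodic function is periodic. -/
theorem periodic_fderiv_aux (f : E → F) (hf : Differentiable ℝ f) (c : E)
    (hc : ∀ x, f (x + c) = f x) (x : E) : fderiv ℝ f (x + c) = fderiv ℝ f x := by
  have h1 : HasFDerivAt (fun y => f (y + c))
      ((fderiv ℝ f (x + c)).comp (ContinuousLinearMap.id ℝ E)) x :=
    (hf (x + c)).hasFDerivAt.comp x ((hasFDerivAt_id x).add_const c)
  have h2 : (fun y => f (y + c)) = f := funext hc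
  rw [h2] at h1
  rw [h1.fderiv, ContinuousLinearMap.comp_id]

/-- iterated derivatives of a smooth periodic function are periodic. -/
theorem periodic_iteratedFDeriv_aux (f : E → F) (hf : ContDiff ℝ (⊤ : ℕ∞) f) (c : E)
    (hc : ∀ x, f (x + c) = f x) (n : ℕ) (x : E) :
    iteratedFDeriv ℝ n f (x + c) = iteratedFDeriv ℝ n f x := by
  induction n generalizing x with
  | zero => ext m; simp [hc x]
  | succ n ih =>
      rw [iteratedFDeriv_succ_eq_comp_left]
      simp only [Function.comp_apply]
      congr 1
      exact periodic_fderiv_aux (iteratedFDeriv ℝ n f)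
        ((hf.iteratedFDeriv_right (m := (⊤ : ℕ∞)) (by exact_mod_cast le_top)).differentiable (by simp)) c ih x

/-- A function periodic under each `w i` is periodic under the generated lattice. -/
theorem periodic_lattice_aux {M G : Type*} [AddCommGroup M] {ι : Type*} [Fintype ι]
    (f : M → G) (w : ι → M) (hf : ∀ x i, f (x + w i) = f x) (c : ι → ℤ) (x : M) :
    f (x + ∑ i, c i • w i) = f x := by
  have hone : ∀ (u : M), (∀ y, f (y + u) = f y) → ∀ (k : ℤ) (y : M), f (y + k • u) = f y := by
    intro u hu k
    induction k using Int.induction_on with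
    | zero => simp
    | succ k ih =>
        intro y
        have : y + ((k : ℤ) + 1) • u = (y + u) + (k : ℤ) • u := by
          rw [add_smul, one_smul]; abel
        rw [this, ih (y + u), hu y]
    | pred k ih =>
        intro y
        have hu' : ∀ z, f (z - u) = f z := by
          intro z; conv_rhs => rw [← sub_add_cancel z u, hu]
        have heq : y + (-(k : ℤ) - 1) • u = (y - u) + (-(k : ℤ)) • u := by
          rw [sub_smul, one_smul]; abel
        rw [heq, ih (y - u), hu' y]
  classical
  suffices H : ∀ s : Finset ι, ∀ y : M, f (y + ∑ i ∈ s, c i • w i) = f y from H Finset.univ x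
  intro s
  induction s using Finset.induction_on with
  | empty => simp
  | @insert a s ha ih =>
      intro y
      rw [Finset.sum_insert ha, ← add_assoc, ih (y + c a • w a),
        hone (w a) (fun z => hf z a) (c a) y]

/-- Representation of a point modulo the scaled lattice. -/
theorem rep_aux (d : ℕ) (v : Module.Basis (Fin d) ℝ (EuclideanSpace ℝ (Fin d)))
    (ε : ℝ) (hε0 : 0 < ε) (y : EuclideanSpace ℝ (Fin d)) :
    y - ∑ i, (⌊(v.repr y) i / ε⌋ : ℤ) • (ε • v i)
      = ∑ i, (Int.fract ((v.repr y) i / ε) * ε) • v i := by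
  have hz : ∀ i, (⌊(v.repr y) i / ε⌋ : ℤ) • (ε • v i)
      = ((v.repr y) i - Int.fract ((v.repr y) i / ε) * ε) • v i := by
    intro i
    rw [← Int.cast_smul_eq_zsmul ℝ, smul_smul]
    congr 1
    rw [Int.fract, sub_mul, div_mul_cancel₀ _ (ne_of_gt hε0)]
    ring
  calc y - ∑ i, (⌊(v.repr y) i / ε⌋ : ℤ) • (ε • v i)
      = ∑ i, (v.repr y) i • v i
        - ∑ i, ((v.repr y) i - Int.fract ((v.repr y) i / ε) * ε) • v i := by
        rw [v.sum_repr y]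
        congr 1
        exact Finset.sum_congr rfl fun i _ => hz i
    _ = ∑ i, (Int.fract ((v.repr y) i / ε) * ε) • v i := by
        rw [← Finset.sum_sub_distrib]
        refine Finset.sum_congr rfl fun i _ => ?_
        rw [← sub_smul]
        congr 1
        ring

set_option maxHeartbeats 1000000 in
/-- One-step decay: if the `(n+2)`-th derivative of a lattice-periodic smooth function
is bounded by `C`, then the `(n+1)`-th derivative is bounded by `L C ε`. -/
theorem periodic_step
    (d : ℕ) (v : Module.Basis (Fin d) ℝ (EuclideanSpace ℝ (Fin d)))
    (ε : ℝ) (hε0 : 0 < ε)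
    (h : EuclideanSpace ℝ (Fin d) → ℝ) (hsmooth : ContDiff ℝ (⊤ : ℕ∞) h)
    (hper : ∀ (x : EuclideanSpace ℝ (Fin d)) (i : Fin d), h (x + ε • v i) = h x)
    (n : ℕ) (C : ℝ) (hC : 0 ≤ C)
    (hb : ∀ x, ‖iteratedFDeriv ℝ (n + 2) h x‖ ≤ C) :
    ∀ x, ‖iteratedFDeriv ℝ (n + 1) h x‖ ≤ (∑ i, ‖v i‖) * C * ε := by
  have hL : (0:ℝ) ≤ ∑ i, ‖v i‖ := Finset.sum_nonneg fun i _ => norm_nonneg _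
  -- representation of any point modulo the lattice
  have key : ∀ y : EuclideanSpace ℝ (Fin d), ∃ c : Fin d → ℤ,
      y - ∑ i, c i • (ε • v i) = ∑ i, (Int.fract (v.repr y i / ε) * ε) • v i := by
    intro y
    exact ⟨fun i => ⌊(v.repr y) i / ε⌋, rep_aux d v ε hε0 y⟩
  intro x
  have hLCε : (0:ℝ) ≤ (∑ i, ‖v i‖) * C * ε := by positivity
  rw [ContinuousMultilinearMap.opNorm_le_iff hLCε]
  intro u
  set w := Fin.tail u with hw
  have hA : ContDiff ℝ (⊤ : ℕ∞) (iteratedFDeriv ℝ n h) := hsmooth.iteratedFDeriv_right (by exact_mod_cast le_top)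
  set φ := ContinuousMultilinearMap.apply ℝ
    (fun _ : Fin n => EuclideanSpace ℝ (Fin d)) ℝ w with hφ
  set g : EuclideanSpace ℝ (Fin d) → ℝ := fun y => iteratedFDeriv ℝ n h y w with hgdef
  have hg : ContDiff ℝ (⊤ : ℕ∞) g := φ.contDiff.comp hA
  have hgper : ∀ y i, g (y + ε • v i) = g y := by
    intro y i
    simp only [hgdef]
    rw [periodic_iteratedFDeriv_aux h hsmooth (ε • v i) (fun z => hper z i) n y]
  have hfderiv_g : ∀ y, fderiv ℝ g y (u 0) = iteratedFDeriv ℝ (n+1) h y u := by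
    intro y
    have hAy : HasFDerivAt (iteratedFDeriv ℝ n h)
        (fderiv ℝ (iteratedFDeriv ℝ n h) y) y :=
      ((hA.differentiable (by simp)) y).hasFDerivAt
    have hcomp : HasFDerivAt g (φ.comp (fderiv ℝ (iteratedFDeriv ℝ n h) y)) y :=
      φ.hasFDerivAt.comp y hAy
    rw [hcomp.fderiv]
    rfl
  -- fundamental domain and global maximum
  set K := (fun s : Fin d → ℝ => ∑ i, s i • (ε • v i)) '' Set.Icc (0 : Fin d → ℝ) 1 with hK
  have hKc : IsCompact K := isCompact_Icc.image (by continuity)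
  have hKne : K.Nonempty := ⟨0, 0, Set.mem_Icc.2 ⟨le_refl _, zero_le_one⟩, by simp⟩
  obtain ⟨x₀, hx₀K, hx₀max⟩ := hKc.exists_isMaxOn hKne hg.continuous.continuousOn
  have glat : ∀ (c : Fin d → ℤ) y, g (y + ∑ i, c i • (ε • v i)) = g y := fun c y =>
    periodic_lattice_aux g (fun i => ε • v i) (fun z i => hgper z i) c y
  have hglob : ∀ y, g y ≤ g x₀ := by
    intro y
    obtain ⟨c, hc⟩ := key y
    have hyK : y - ∑ i, c i • (ε • v i) ∈ K := by
      rw [hc]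
      refine ⟨fun i => Int.fract (v.repr y i / ε),
        Set.mem_Icc.2 ⟨fun i => Int.fract_nonneg _, fun i => (Int.fract_lt_one _).le⟩, ?_⟩
      simp [smul_smul]
    have hyeq : g y = g (y - ∑ i, c i • (ε • v i)) := by
      conv_lhs => rw [show y = (y - ∑ i, c i • (ε • v i)) + ∑ i, c i • (ε • v i) by abel]
      exact glat c _
    rw [hyeq]
    exact hx₀max hyK
  have hlm : IsLocalMax g x₀ := Filter.Eventually.of_forall hglob
  have hd0 : fderiv ℝ g x₀ = 0 := hlm.fderiv_eq_zero
  have hdgper : ∀ y i, fderiv ℝ g (y + ε • v i) = fderiv ℝ g y := fun y i =>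
    periodic_fderiv_aux g (hg.differentiable (by simp)) _ (fun z => hgper z i) y
  have hdglat : ∀ (c : Fin d → ℤ) y,
      fderiv ℝ g (y + ∑ i, c i • (ε • v i)) = fderiv ℝ g y := fun c y =>
    periodic_lattice_aux (fderiv ℝ g) (fun i => ε • v i) (fun z i => hdgper z i) c y
  -- translate the critical point near x
  obtain ⟨c, hc⟩ := key (x - x₀)
  set z := x₀ + ∑ i, c i • (ε • v i) with hzdef
  have hdz : fderiv ℝ g z = 0 := (hdglat c x₀).trans hd0
  have hxz : x - z = ∑ i, (Int.fract (v.repr (x - x₀) i / ε) * ε) • v i := by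
    rw [← hc, hzdef]; abel
  have hnorm_xz : ‖x - z‖ ≤ ε * ∑ i, ‖v i‖ := by
    rw [hxz]
    calc ‖∑ i, (Int.fract (v.repr (x - x₀) i / ε) * ε) • v i‖
        ≤ ∑ i, ‖(Int.fract (v.repr (x - x₀) i / ε) * ε) • v i‖ := norm_sum_le _ _
      _ ≤ ∑ i, ε * ‖v i‖ := by
          refine Finset.sum_le_sum fun i _ => ?_
          rw [norm_smul, Real.norm_eq_abs,
            abs_of_nonneg (mul_nonneg (Int.fract_nonneg _) hε0.le)]
          refine mul_le_mul_of_nonneg_right ?_ (norm_nonneg _)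
          calc Int.fract (v.repr (x - x₀) i / ε) * ε ≤ 1 * ε :=
                mul_le_mul_of_nonneg_right (Int.fract_lt_one _).le hε0.le
            _ = ε := one_mul ε
      _ = ε * ∑ i, ‖v i‖ := by rw [Finset.mul_sum]
  -- Lipschitz estimate for the (n+1)-th derivative
  have hdiff : ∀ y ∈ (Set.univ : Set (EuclideanSpace ℝ (Fin d))),
      DifferentiableAt ℝ (iteratedFDeriv ℝ (n+1) h) y := fun y _ =>
    ((hsmooth.iteratedFDeriv_right (m := (⊤ : ℕ∞)) (by exact_mod_cast le_top)).differentiable (by simp)) y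
  have hbnd : ∀ y ∈ (Set.univ : Set (EuclideanSpace ℝ (Fin d))),
      ‖fderiv ℝ (iteratedFDeriv ℝ (n+1) h) y‖ ≤ C := by
    intro y _
    rw [fderiv_iteratedFDeriv]
    simp only [Function.comp_apply, LinearIsometryEquiv.norm_map]
    exact hb y
  have hLip := Convex.norm_image_sub_le_of_norm_fderiv_le hdiff hbnd convex_univ
    (Set.mem_univ z) (Set.mem_univ x)
  have hzu : iteratedFDeriv ℝ (n+1) h z u = 0 := by
    rw [← hfderiv_g z, hdz]
    simp
  have hprod : (0:ℝ) ≤ ∏ i, ‖u i‖ := Finset.prod_nonneg fun i _ => norm_nonneg _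
  calc ‖iteratedFDeriv ℝ (n+1) h x u‖
      = ‖(iteratedFDeriv ℝ (n+1) h x - iteratedFDeriv ℝ (n+1) h z) u‖ := by
        rw [ContinuousMultilinearMap.sub_apply, hzu, sub_zero]
    _ ≤ ‖iteratedFDeriv ℝ (n+1) h x - iteratedFDeriv ℝ (n+1) h z‖ * ∏ i, ‖u i‖ :=
        ContinuousMultilinearMap.le_opNorm _ u
    _ ≤ (C * ‖x - z‖) * ∏ i, ‖u i‖ := mul_le_mul_of_nonneg_right hLip hprod
    _ ≤ (C * (ε * ∑ i, ‖v i‖)) * ∏ i, ‖u i‖ := by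
        refine mul_le_mul_of_nonneg_right (mul_le_mul_of_nonneg_left hnorm_xz hC) hprod
    _ = (∑ i, ‖v i‖) * C * ε * ∏ i, ‖u i‖ := by ring

/-- Quantitative step of Appendix Lemma A.2: a smooth function on `ℝ^d` that is
periodic with respect to a lattice scaled by `ε`, with `(k+ν)`-th derivative
bounded by `C₀`, has `k`-th derivative bounded by `L^ν C₀ ε^ν`, where
`L = ‖v₁‖ + ⋯ + ‖v_d‖` is the total length of the lattice basis. -/
theorem periodic_derivative_decay
    (d : ℕ) (hd : 1 ≤ d)
    (v : Module.Basis (Fin d) ℝ (EuclideanSpace ℝ (Fin d)))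
    (ν k : ℕ) (hk : 1 ≤ k)
    (ε : ℝ) (hε0 : 0 < ε) (hε1 : ε ≤ 1)
    (h : EuclideanSpace ℝ (Fin d) → ℝ) (hsmooth : ContDiff ℝ (⊤ : ℕ∞) h)
    (hper : ∀ (x : EuclideanSpace ℝ (Fin d)) (i : Fin d), h (x + ε • v i) = h x)
    (C₀ : ℝ) (hC₀ : 0 < C₀)
    (hbound : ∀ x, ‖iteratedFDeriv ℝ (k + ν) h x‖ ≤ C₀) :
    ∀ x, ‖iteratedFDeriv ℝ k h x‖ ≤ (∑ i, ‖v i‖) ^ ν * C₀ * ε ^ ν := by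
  have hL : (0:ℝ) ≤ ∑ i, ‖v i‖ := Finset.sum_nonneg fun i _ => norm_nonneg _
  suffices H : ∀ (m : ℕ) (C : ℝ), 0 ≤ C → (∀ x, ‖iteratedFDeriv ℝ (k + m) h x‖ ≤ C) →
      ∀ x, ‖iteratedFDeriv ℝ k h x‖ ≤ (∑ i, ‖v i‖) ^ m * C * ε ^ m from
    H ν C₀ hC₀.le hbound
  intro m
  induction m with
  | zero => intro C hC hb x; simpa using hb x
  | succ m ih =>
      intro C hC hb x
      have hstep : ∀ y, ‖iteratedFDeriv ℝ (k + m) h y‖ ≤ (∑ i, ‖v i‖) * C * ε := by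
        obtain ⟨p, hp⟩ : ∃ p, k + m = p + 1 := ⟨k + m - 1, by omega⟩
        have hb' : ∀ y, ‖iteratedFDeriv ℝ (p + 2) h y‖ ≤ C := by
          intro y
          have hpp : p + 2 = k + (m + 1) := by omega
          rw [hpp]; exact hb y
        rw [hp]
        exact periodic_step d v ε hε0 h hsmooth hper p C hC hb'
      have hmain := ih ((∑ i, ‖v i‖) * C * ε) (by positivity) hstep x
      calc ‖iteratedFDeriv ℝ k h x‖
          ≤ (∑ i, ‖v i‖) ^ m * ((∑ i, ‖v i‖) * C * ε) * ε ^ m := hmain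
        _ = (∑ i, ‖v i‖) ^ (m + 1) * C * ε ^ (m + 1) := by ring
end

section
/- Let d ≥ 1, let v₁, …, v_d be a basis of ℝ^d, set L = ‖v₁‖ + ⋯ + ‖v_d‖, and let ν ≥ 1 be an integer. Suppose ε ∈ (0, 1] and h : ℝ^d → ℝ is a smooth function that is periodic with respect to the scaled lattice ε(ℤv₁ + ⋯ + ℤv_d), i.e. h(x + ε vᵢ) = h(x) for all x ∈ ℝ^d and all i = 1, …, d, and suppose sup_{ℝ^d} ‖D^{ν} h‖ ≤ C₀ for some constant C₀ > 0. Then the oscillation of h satisfies sup_{ℝ^d} h − inf_{ℝ^d} h ≤ L^{ν} C₀ ε^{ν}. -/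
open Function Set

private lemma coe_lt_infty (m : ℕ) : (m : WithTop ℕ∞) < ((⊤ : ℕ∞) : WithTop ℕ∞) := by
  have : ((m : ℕ∞) : WithTop ℕ∞) < ((⊤ : ℕ∞) : WithTop ℕ∞) :=
    WithTop.coe_lt_coe.mpr (WithTop.coe_lt_top m)
  exact_mod_cast this

private lemma periodic_iteratedDeriv {φ : ℝ → ℝ} (hper : Function.Periodic φ 1) :
    ∀ n : ℕ, Function.Periodic (iteratedDeriv n φ) 1 := by
  intro n
  induction n with
  | zero => simpa using hper
  | succ n ih =>
    rw [iteratedDeriv_succ]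
    intro x
    have : (fun y => iteratedDeriv n φ (y + 1)) = iteratedDeriv n φ := funext fun y => ih y
    calc deriv (iteratedDeriv n φ) (x + 1) = deriv (fun y => iteratedDeriv n φ (y + 1)) x := by
          rw [deriv_comp_add_const]
      _ = deriv (iteratedDeriv n φ) x := by rw [this]

private lemma bound_of_deriv_bound {g : ℝ → ℝ} (hg : Differentiable ℝ g)
    (hper : Function.Periodic g 1) {c : ℝ} (hc : g c = 0) {K : ℝ}
    (hK : ∀ s, |deriv g s| ≤ K) : ∀ s, |g s| ≤ K := by
  intro s
  have hK0 : 0 ≤ K := le_trans (abs_nonneg _) (hK 0)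
  set m : ℤ := ⌊s - c⌋ with hm
  have hgs : g (s - m) = g s := by
    simpa using hper.sub_int_mul_eq (n := m) (x := s)
  have hmvt : ‖g (s - m) - g c‖ ≤ K * ‖(s - m) - c‖ :=
    Convex.norm_image_sub_le_of_norm_deriv_le (fun x _ => hg x)
      (fun x _ => hK x) convex_univ (mem_univ _) (mem_univ _)
  have hfr : |(s - m) - c| ≤ 1 := by
    have h1 := Int.fract_nonneg (s - c)
    have h2 := Int.fract_lt_one (s - c)
    have he : (s - m) - c = Int.fract (s - c) := by
      rw [Int.fract, hm]; ring
    rw [he, abs_of_nonneg h1]; linarith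
  calc |g s| = |g (s - m) - g c| := by rw [hgs, hc, sub_zero]
    _ ≤ K * |(s - m) - c| := by simpa [Real.norm_eq_abs] using hmvt
    _ ≤ K * 1 := mul_le_mul_of_nonneg_left hfr hK0
    _ = K := mul_one K

private lemma oneD {φ : ℝ → ℝ} (hφ : ContDiff ℝ ((⊤ : ℕ∞) : WithTop ℕ∞) φ)
    (hper : Function.Periodic φ 1)
    {ν : ℕ} (hν : 1 ≤ ν) {K : ℝ} (hbd : ∀ s, |iteratedDeriv ν φ s| ≤ K)
    {t : ℝ} (ht0 : 0 ≤ t) (ht1 : t ≤ 1) : |φ t - φ 0| ≤ K := by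
  have hdiff : ∀ j : ℕ, Differentiable ℝ (iteratedDeriv j φ) := fun j =>
    hφ.differentiable_iteratedDeriv j (coe_lt_infty j)
  have key : ∀ m j, 1 ≤ j → j ≤ ν → ν - j = m → ∀ s, |iteratedDeriv j φ s| ≤ K := by
    intro m
    induction m with
    | zero =>
      intro j h1 h2 h3 s
      have : j = ν := by omega
      subst this; exact hbd s
    | succ m ih =>
      intro j h1 h2 h3 s
      obtain ⟨j', rfl⟩ : ∃ j', j = j' + 1 := ⟨j - 1, by omega⟩
      -- find a zero of iteratedDeriv (j'+1) φ by Rolle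
      have hcont : ContinuousOn (iteratedDeriv j' φ) (Icc 0 1) :=
        (hdiff j').continuous.continuousOn
      have heq : iteratedDeriv j' φ 0 = iteratedDeriv j' φ 1 := by
        have := (periodic_iteratedDeriv hper j') 0
        simpa using this.symm
      obtain ⟨c, _, hc⟩ := exists_deriv_eq_zero zero_lt_one hcont heq
      have hc' : iteratedDeriv (j' + 1) φ c = 0 := by rw [iteratedDeriv_succ]; exact hc
      have hdbd : ∀ s, |deriv (iteratedDeriv (j' + 1) φ) s| ≤ K := by
        intro s
        rw [← iteratedDeriv_succ]
        exact ih (j' + 2) (by omega) (by omega) (by omega) s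
      exact bound_of_deriv_bound (hdiff (j' + 1)) (periodic_iteratedDeriv hper (j' + 1))
        hc' hdbd s
  have hd1 : ∀ s, |deriv φ s| ≤ K := by
    intro s
    have := key (ν - 1) 1 le_rfl hν (by omega) s
    simpa [iteratedDeriv_one] using this
  have hφd : Differentiable ℝ φ := by
    have := hdiff 0; rwa [iteratedDeriv_zero] at this
  have hmvt : ‖φ t - φ 0‖ ≤ K * ‖t - 0‖ :=
    Convex.norm_image_sub_le_of_norm_deriv_le (fun x _ => hφd x)
      (fun x _ => hd1 x) convex_univ (mem_univ _) (mem_univ _)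
  have hK0 : 0 ≤ K := le_trans (abs_nonneg _) (hbd 0)
  calc |φ t - φ 0| ≤ K * |t - 0| := by simpa [Real.norm_eq_abs] using hmvt
    _ ≤ K * 1 := mul_le_mul_of_nonneg_left (by rw [sub_zero, abs_of_nonneg ht0]; exact ht1) hK0
    _ = K := mul_one K

private lemma itfd_const_add {E F : Type*} [NormedAddCommGroup E] [NormedSpace ℝ E]
    [NormedAddCommGroup F] [NormedSpace ℝ F]
    {f : E → F} (hf : ContDiff ℝ ((⊤ : ℕ∞) : WithTop ℕ∞) f) (c : E) :
    ∀ (n : ℕ) (x : E), iteratedFDeriv ℝ n (fun y => f (c + y)) x = iteratedFDeriv ℝ n f (c + x) := by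
  intro n
  induction n with
  | zero => intro x; ext m; simp
  | succ n ih =>
    intro x
    have hG : Differentiable ℝ (iteratedFDeriv ℝ n f) :=
      hf.differentiable_iteratedFDeriv (coe_lt_infty n)
    have hfd : HasFDerivAt (fun y => iteratedFDeriv ℝ n f (c + y))
        (fderiv ℝ (iteratedFDeriv ℝ n f) (c + x)) x := by
      have h1 : HasFDerivAt (iteratedFDeriv ℝ n f)
          (fderiv ℝ (iteratedFDeriv ℝ n f) (c + x)) (c + x) := (hG (c + x)).hasFDerivAt
      have h2 : HasFDerivAt (fun y : E => c + y) (ContinuousLinearMap.id ℝ E) x := by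
        simpa using (hasFDerivAt_id x).const_add c
      have h3 := h1.comp x h2
      rw [ContinuousLinearMap.comp_id] at h3
      exact h3
    have hfe : fderiv ℝ (iteratedFDeriv ℝ n (fun y => f (c + y))) x
        = fderiv ℝ (iteratedFDeriv ℝ n f) (c + x) := by
      have : iteratedFDeriv ℝ n (fun y => f (c + y)) = fun y => iteratedFDeriv ℝ n f (c + y) :=
        funext fun y => ih y
      rw [this]
      exact hfd.fderiv
    ext m
    rw [iteratedFDeriv_succ_apply_left, iteratedFDeriv_succ_apply_left, hfe]

private lemma line_bound {E : Type*} [NormedAddCommGroup E] [NormedSpace ℝ E]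
    {h : E → ℝ} (hsmooth : ContDiff ℝ ((⊤ : ℕ∞) : WithTop ℕ∞) h) {ν : ℕ} {C₀ : ℝ}
    (hbound : ∀ x, ‖iteratedFDeriv ℝ ν h x‖ ≤ C₀)
    (z w : E) (s : ℝ) :
    |iteratedDeriv ν (fun s : ℝ => h (z + s • w)) s| ≤ C₀ * ‖w‖ ^ ν := by
  set L : ℝ →L[ℝ] E := ContinuousLinearMap.smulRight (ContinuousLinearMap.id ℝ ℝ) w with hL
  have hf₁ : ContDiff ℝ ((⊤ : ℕ∞) : WithTop ℕ∞) (fun y => h (z + y)) :=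
    hsmooth.comp (contDiff_const.add contDiff_id)
  have hEq : (fun s : ℝ => h (z + s • w)) = (fun y => h (z + y)) ∘ ⇑L := by
    funext s; simp [hL]
  rw [iteratedDeriv_eq_iteratedFDeriv, hEq,
    ContinuousLinearMap.iteratedFDeriv_comp_right L hf₁ s (coe_lt_infty ν).le,
    ContinuousMultilinearMap.compContinuousLinearMap_apply,
    itfd_const_add hsmooth z ν (L s)]
  have happ : (fun i : Fin ν => L 1) = fun _ : Fin ν => w := by
    funext i; simp [hL]
  rw [happ]
  calc |iteratedFDeriv ℝ ν h (z + L s) fun _ => w|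
      ≤ ‖iteratedFDeriv ℝ ν h (z + L s)‖ * ∏ _i : Fin ν, ‖w‖ := by
        simpa [Real.norm_eq_abs] using
          (iteratedFDeriv ℝ ν h (z + L s)).le_opNorm fun _ => w
    _ ≤ C₀ * ‖w‖ ^ ν := by
        rw [Finset.prod_const, Finset.card_univ, Fintype.card_fin]
        exact mul_le_mul_of_nonneg_right (hbound _) (by positivity)


/-- Oscillation estimate of Appendix Lemma A.2 -/
theorem periodic_oscillation_decay
    (d : ℕ) (hd : 1 ≤ d)
    (v : Module.Basis (Fin d) ℝ (EuclideanSpace ℝ (Fin d)))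
    (ν : ℕ) (hν : 1 ≤ ν)
    (ε : ℝ) (hε0 : 0 < ε) (hε1 : ε ≤ 1)
    (h : EuclideanSpace ℝ (Fin d) → ℝ) (hsmooth : ContDiff ℝ (⊤ : ℕ∞) h)
    (hper : ∀ (x : EuclideanSpace ℝ (Fin d)) (i : Fin d), h (x + ε • v i) = h x)
    (C₀ : ℝ) (hC₀ : 0 < C₀)
    (hbound : ∀ x, ‖iteratedFDeriv ℝ ν h x‖ ≤ C₀) :
    sSup (Set.range h) - sInf (Set.range h) ≤ (∑ i, ‖v i‖) ^ ν * C₀ * ε ^ ν := by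
  have hsm : ContDiff ℝ ((⊤ : ℕ∞) : WithTop ℕ∞) h := hsmooth.of_le (by simp)
  -- periodicity under integer multiples
  have hper_int : ∀ (m : ℤ) (z : EuclideanSpace ℝ (Fin d)) (i : Fin d),
      h (z + ((m : ℝ) * ε) • v i) = h z := by
    intro m
    induction m using Int.induction_on with
    | zero => intro z i; simp
    | succ m ih =>
      intro z i
      push_cast
      have e : z + (((m : ℝ) + 1) * ε) • v i = (z + ((m : ℝ) * ε) • v i) + ε • v i := by
        module
      rw [e, hper]
      exact ih z i
    | pred m ih =>
      intro z i
      push_cast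
      push_cast at ih
      have e : (z + ((-(m : ℝ) - 1) * ε) • v i) + ε • v i = z + (-(m : ℝ) * ε) • v i := by
        module
      calc h (z + ((-(m : ℝ) - 1) * ε) • v i)
          = h ((z + ((-(m : ℝ) - 1) * ε) • v i) + ε • v i) := (hper _ i).symm
        _ = h (z + (-(m : ℝ) * ε) • v i) := by rw [e]
        _ = h z := ih z i
  have hper_sum : ∀ (n : Fin d → ℤ) (s : Finset (Fin d)) (z : EuclideanSpace ℝ (Fin d)),
      h (z + ∑ i ∈ s, ((n i : ℝ) * ε) • v i) = h z := by
    intro n s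
    induction s using Finset.induction_on with
    | empty => intro z; simp
    | @insert a s ha ih =>
      intro z
      rw [Finset.sum_insert ha, ← add_assoc, ih, hper_int]
  -- the one-dimensional estimate
  have key1D : ∀ (z : EuclideanSpace ℝ (Fin d)) (i : Fin d) (t : ℝ), 0 ≤ t → t ≤ 1 →
      h (z + (t * ε) • v i) - h z ≤ C₀ * ε ^ ν * ‖v i‖ ^ ν := by
    intro z i t ht0 ht1
    have hφ : ContDiff ℝ ((⊤ : ℕ∞) : WithTop ℕ∞) (fun s : ℝ => h (z + s • (ε • v i))) :=
      hsm.comp (contDiff_const.add (contDiff_id.smul contDiff_const))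
    have hperφ : Function.Periodic (fun s : ℝ => h (z + s • (ε • v i))) 1 := by
      intro s
      have e : z + (s + 1) • (ε • v i) = (z + s • (ε • v i)) + ε • v i := by module
      simp only
      rw [e, hper]
    have hbd : ∀ s, |iteratedDeriv ν (fun s : ℝ => h (z + s • (ε • v i))) s|
        ≤ C₀ * ‖ε • v i‖ ^ ν := line_bound hsm hbound z (ε • v i)
    have hosc := oneD hφ hperφ hν hbd ht0 ht1
    have hφt : (fun s : ℝ => h (z + s • (ε • v i))) t = h (z + (t * ε) • v i) := by
      simp only; rw [smul_smul]
    have hφ0 : (fun s : ℝ => h (z + s • (ε • v i))) 0 = h z := by simp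
    have hn : ‖ε • v i‖ = ε * ‖v i‖ := by
      rw [norm_smul, Real.norm_eq_abs, abs_of_pos hε0]
    calc h (z + (t * ε) • v i) - h z
        ≤ |h (z + (t * ε) • v i) - h z| := le_abs_self _
      _ ≤ C₀ * ‖ε • v i‖ ^ ν := by rw [← hφt, ← hφ0]; exact hosc
      _ = C₀ * ε ^ ν * ‖v i‖ ^ ν := by rw [hn, mul_pow, mul_assoc]
  -- the pairwise bound
  have pair : ∀ x y : EuclideanSpace ℝ (Fin d),
      h x - h y ≤ (∑ i, ‖v i‖) ^ ν * C₀ * ε ^ ν := by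
    intro x y
    obtain ⟨t, n, htn, ht0, ht1⟩ : ∃ (t : Fin d → ℝ) (n : Fin d → ℤ),
        (∀ i, v.repr (x - y) i = t i * ε + (n i : ℝ) * ε) ∧
          (∀ i, 0 ≤ t i) ∧ (∀ i, t i ≤ 1) := by
      refine ⟨fun i => Int.fract (v.repr (x - y) i / ε), fun i => ⌊v.repr (x - y) i / ε⌋,
        fun i => ?_, fun i => Int.fract_nonneg _, fun i => (Int.fract_lt_one _).le⟩
      unfold Int.fract
      field_simp
      ring
    set F : ℕ → EuclideanSpace ℝ (Fin d) :=
      fun k => y + ∑ i ∈ Finset.univ.filter (fun i : Fin d => (i : ℕ) < k), (t i * ε) • v i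
      with hF
    have hF0 : F 0 = y := by simp [hF]
    have hx2 : (y + ∑ i, (t i * ε) • v i) + ∑ i, ((n i : ℝ) * ε) • v i = x := by
      rw [add_assoc, ← Finset.sum_add_distrib]
      have e : ∑ i, ((t i * ε) • v i + ((n i : ℝ) * ε) • v i)
          = ∑ i, v.repr (x - y) i • v i := by
        refine Finset.sum_congr rfl fun i _ => ?_
        rw [← add_smul, ← htn i]
      rw [e, v.sum_repr (x - y)]
      abel
    have hFd : h (F d) = h x := by
      have h1 : Finset.univ.filter (fun i : Fin d => (i : ℕ) < d) = Finset.univ := by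
        ext i; simpa using i.isLt
      have h2 : F d + ∑ i, ((n i : ℝ) * ε) • v i = x := by
        rw [hF]; simp only [h1]; exact hx2
      rw [← h2, hper_sum]
    have hstep : ∀ k, k ∈ Finset.range d → h (F (k + 1)) - h (F k)
        ≤ (fun k => if hk : k < d then C₀ * ε ^ ν * ‖v ⟨k, hk⟩‖ ^ ν else 0) k := by
      intro k hk
      rw [Finset.mem_range] at hk
      simp only [dif_pos hk]
      set i : Fin d := ⟨k, hk⟩ with hi
      have hfil : Finset.univ.filter (fun j : Fin d => (j : ℕ) < k + 1)
          = insert i (Finset.univ.filter (fun j : Fin d => (j : ℕ) < k)) := by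
        ext j
        simp only [Finset.mem_filter, Finset.mem_univ, true_and, Finset.mem_insert, hi,
          Fin.ext_iff]
        omega
      have hnm : i ∉ Finset.univ.filter (fun j : Fin d => (j : ℕ) < k) := by
        simp [hi]
      have hFk : F (k + 1) = F k + (t i * ε) • v i := by
        rw [hF]; simp only [hfil, Finset.sum_insert hnm]
        module
      rw [hFk]
      exact key1D (F k) i (t i) (ht0 i) (ht1 i)
    have tel : h (F d) - h (F 0) = ∑ k ∈ Finset.range d, (h (F (k + 1)) - h (F k)) :=
      (Finset.sum_range_sub (fun k => h (F k)) d).symm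
    have hsum_eq : ∑ k ∈ Finset.range d,
        (fun k => if hk : k < d then C₀ * ε ^ ν * ‖v ⟨k, hk⟩‖ ^ ν else 0) k
        = ∑ i : Fin d, C₀ * ε ^ ν * ‖v i‖ ^ ν := by
      rw [← Fin.sum_univ_eq_sum_range]
      refine Finset.sum_congr rfl fun i _ => ?_
      simp [i.isLt]
    have hsum_pow : ∑ i, ‖v i‖ ^ ν ≤ (∑ i, ‖v i‖) ^ ν := by
      obtain ⟨m, rfl⟩ : ∃ m, ν = m + 1 := ⟨ν - 1, by omega⟩
      have hL0 : ∀ i : Fin d, ‖v i‖ ≤ ∑ j, ‖v j‖ := fun i =>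
        Finset.single_le_sum (fun j _ => norm_nonneg _) (Finset.mem_univ i)
      calc ∑ i, ‖v i‖ ^ (m + 1) = ∑ i, ‖v i‖ * ‖v i‖ ^ m := by
            refine Finset.sum_congr rfl fun i _ => ?_; ring
        _ ≤ ∑ i, ‖v i‖ * (∑ j, ‖v j‖) ^ m := by
            refine Finset.sum_le_sum fun i _ => ?_
            exact mul_le_mul_of_nonneg_left
              (pow_le_pow_left₀ (norm_nonneg _) (hL0 i) m) (norm_nonneg _)
        _ = (∑ i, ‖v i‖) * (∑ j, ‖v j‖) ^ m := by rw [← Finset.sum_mul]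
        _ = (∑ i, ‖v i‖) ^ (m + 1) := by ring
    calc h x - h y = h (F d) - h (F 0) := by rw [hFd, hF0]
      _ = ∑ k ∈ Finset.range d, (h (F (k + 1)) - h (F k)) := tel
      _ ≤ ∑ k ∈ Finset.range d,
          (fun k => if hk : k < d then C₀ * ε ^ ν * ‖v ⟨k, hk⟩‖ ^ ν else 0) k :=
            Finset.sum_le_sum hstep
      _ = ∑ i : Fin d, C₀ * ε ^ ν * ‖v i‖ ^ ν := hsum_eq
      _ = C₀ * ε ^ ν * ∑ i, ‖v i‖ ^ ν := by rw [Finset.mul_sum]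
      _ ≤ C₀ * ε ^ ν * (∑ i, ‖v i‖) ^ ν := by
          exact mul_le_mul_of_nonneg_left hsum_pow (by positivity)
      _ = (∑ i, ‖v i‖) ^ ν * C₀ * ε ^ ν := by ring
  -- conclude via csSup / csInf
  have hne : (Set.range h).Nonempty := ⟨h 0, 0, rfl⟩
  have h1 : sSup (Set.range h) ≤ sInf (Set.range h) + (∑ i, ‖v i‖) ^ ν * C₀ * ε ^ ν := by
    apply csSup_le hne
    rintro _ ⟨x, rfl⟩
    have h2 : h x - (∑ i, ‖v i‖) ^ ν * C₀ * ε ^ ν ≤ sInf (Set.range h) := by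
      apply le_csInf hne
      rintro _ ⟨y, rfl⟩
      have := pair x y
      linarith
    linarith
  linarith
end

section
/- Let n ≥ 1, let τ ∈ ℂ with Im τ > 0, and let q₁, …, qₙ ∈ ℂ be such that qᵢ − qⱼ ∉ ℤ + τℤ whenever i ≠ j. Write Q = diag(q₁, …, qₙ) and Q* = diag(q̄₁, …, q̄ₙ) ∈ Mₙ(ℂ). Suppose η : ℂ → Mₙ(ℂ) is a smooth map (smooth as a map from ℝ² to Mₙ(ℂ)) satisfying the double periodicity η(z + 1) = η(z) and η(z + τ) = η(z) for all z ∈ ℂ, together with the two equations ∂η/∂z̄ + π (Im τ)⁻¹ [Q, η] = 0 and ∂η/∂z − π (Im τ)⁻¹ [Q*, η] = 0 at every point of ℂ. Then η is a constant diagonal matrix. -/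
open Matrix

/-- Wirtinger derivative `∂f/∂z = ½(∂f/∂x − i ∂f/∂y)` of a map `f : ℂ → ℂ`,
viewed as a map `ℝ² → ℂ`, expressed through the real Fréchet derivative. -/
noncomputable def wirtingerZ (f : ℂ → ℂ) (z : ℂ) : ℂ :=
  (1 / 2 : ℂ) * (fderiv ℝ f z 1 - Complex.I * fderiv ℝ f z Complex.I)

/-- Conjugate Wirtinger derivative `∂f/∂z̄ = ½(∂f/∂x + i ∂f/∂y)`. -/
noncomputable def wirtingerZBar (f : ℂ → ℂ) (z : ℂ) : ℂ :=
  (1 / 2 : ℂ) * (fderiv ℝ f z 1 + Complex.I * fderiv ℝ f z Complex.I)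

lemma const_of_wirtinger (f : ℂ → ℂ) (hf : Differentiable ℝ f)
    (h1 : ∀ z, wirtingerZ f z = 0) (h2 : ∀ z, wirtingerZBar f z = 0) :
    ∀ z, f z = f 0 := by
  have hd : ∀ z, fderiv ℝ f z = 0 := by
    intro z
    have e1 := h1 z
    have e2 := h2 z
    unfold wirtingerZ at e1
    unfold wirtingerZBar at e2
    have hA : fderiv ℝ f z 1 = 0 := by linear_combination e1 + e2
    have hB : fderiv ℝ f z Complex.I = 0 := by
      linear_combination Complex.I * (e1 - e2) + (fderiv ℝ f z Complex.I) * Complex.I_sq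
    ext v
    have hv : v = (v.re : ℝ) • (1 : ℂ) + (v.im : ℝ) • Complex.I := by
      rw [Complex.real_smul, Complex.real_smul, mul_one]
      exact (Complex.re_add_im v).symm
    rw [hv, map_add, (fderiv ℝ f z).map_smul, (fderiv ℝ f z).map_smul, hA, hB]
    simp
  intro z
  exact is_const_of_fderiv_eq_zero hf hd z 0

noncomputable def Lmap (α β : ℂ) : ℂ →L[ℝ] ℂ :=
  α • (Complex.conjCLE : ℂ ≃L[ℝ] ℂ).toContinuousLinearMap + β • ContinuousLinearMap.id ℝ ℂ

lemma Lmap_apply (α β v : ℂ) : Lmap α β v = α * (starRingEnd ℂ) v + β * v := by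
  simp [Lmap, Complex.conjCLE_apply, smul_eq_mul]

lemma hasFDerivAt_expLin (α β z : ℂ) :
    HasFDerivAt (fun w => Complex.exp (α * (starRingEnd ℂ) w + β * w))
      (Complex.exp (α * (starRingEnd ℂ) z + β * z) • Lmap α β) z := by
  have hL : HasFDerivAt (fun w => α * (starRingEnd ℂ) w + β * w) (Lmap α β) z := by
    have := (Lmap α β).hasFDerivAt (x := z)
    apply this.congr_of_eventuallyEq
    filter_upwards with w
    rw [Lmap_apply]
  have hexp := (Complex.hasDerivAt_exp (α * (starRingEnd ℂ) z + β * z)).hasFDerivAt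
  have hexp' := hexp.restrictScalars ℝ
  have := hexp'.comp z hL
  refine this.congr_fderiv ?_
  ext v
  simp [Lmap_apply, smul_eq_mul, mul_comm]

lemma differentiable_expLin (α β : ℂ) :
    Differentiable ℝ (fun w => Complex.exp (α * (starRingEnd ℂ) w + β * w)) :=
  fun z => (hasFDerivAt_expLin α β z).differentiableAt

lemma wirtingerZBar_expLin (α β z : ℂ) :
    wirtingerZBar (fun w => Complex.exp (α * (starRingEnd ℂ) w + β * w)) z
      = α * Complex.exp (α * (starRingEnd ℂ) z + β * z) := by
  unfold wirtingerZBar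
  rw [(hasFDerivAt_expLin α β z).fderiv]
  simp only [ContinuousLinearMap.smul_apply, Lmap_apply, smul_eq_mul, _root_.map_one, Complex.conj_I]
  linear_combination (1/2 * Complex.exp (α * (starRingEnd ℂ) z + β * z) * (β - α)) * Complex.I_sq

lemma wirtingerZ_expLin (α β z : ℂ) :
    wirtingerZ (fun w => Complex.exp (α * (starRingEnd ℂ) w + β * w)) z
      = β * Complex.exp (α * (starRingEnd ℂ) z + β * z) := by
  unfold wirtingerZ
  rw [(hasFDerivAt_expLin α β z).fderiv]
  simp only [ContinuousLinearMap.smul_apply, Lmap_apply, smul_eq_mul, _root_.map_one, Complex.conj_I]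
  linear_combination (1/2 * Complex.exp (α * (starRingEnd ℂ) z + β * z) * (α - β)) * Complex.I_sq

lemma wirtingerZBar_mul (f h : ℂ → ℂ) (z : ℂ)
    (hf : DifferentiableAt ℝ f z) (hh : DifferentiableAt ℝ h z) :
    wirtingerZBar (fun w => f w * h w) z
      = wirtingerZBar f z * h z + f z * wirtingerZBar h z := by
  unfold wirtingerZBar
  rw [fderiv_fun_mul hf hh]
  simp only [ContinuousLinearMap.add_apply, ContinuousLinearMap.smul_apply, smul_eq_mul]
  ring

lemma wirtingerZ_mul (f h : ℂ → ℂ) (z : ℂ)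
    (hf : DifferentiableAt ℝ f z) (hh : DifferentiableAt ℝ h z) :
    wirtingerZ (fun w => f w * h w) z
      = wirtingerZ f z * h z + f z * wirtingerZ h z := by
  unfold wirtingerZ
  rw [fderiv_fun_mul hf hh]
  simp only [ContinuousLinearMap.add_apply, ContinuousLinearMap.smul_apply, smul_eq_mul]
  ring

lemma real_eq_of_lattice (t : ℝ) (ht : t ≠ 0) (z : ℂ) (k : ℤ)
    (h : (Real.pi : ℂ) * ((t : ℂ))⁻¹ * (z - (starRingEnd ℂ) z)
        = (k : ℂ) * (2 * Real.pi * Complex.I)) :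
    z.im = k * t := by
  rw [Complex.sub_conj] at h
  have hπ : (Real.pi : ℂ) ≠ 0 := Complex.ofReal_ne_zero.mpr Real.pi_ne_zero
  have ht' : ((t : ℂ)) ≠ 0 := Complex.ofReal_ne_zero.mpr ht
  have hI := Complex.I_ne_zero
  have key : (z.im : ℂ) = (k : ℂ) * (t : ℂ) := by
    field_simp at h
    have h2 : (z.im : ℂ) * (2 * Real.pi * Complex.I)
        = ((k : ℂ) * (t : ℂ)) * (2 * Real.pi * Complex.I) := by push_cast at h; linear_combination (Real.pi * Complex.I) * h
    exact mul_right_cancel₀ (mul_ne_zero (mul_ne_zero two_ne_zero hπ) hI) h2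

  exact_mod_cast key


/-- Kernel computation for the flat diagonal connection
`A₀ = π (Im τ)⁻¹ (Q dz̄ − Q* dz)` on the elliptic curve `ℂ/(ℤ + τℤ)`:
if `q₁, …, qₙ` are pairwise distinct modulo the lattice, then any doubly
periodic smooth matrix-valued solution `η` of
`∂η/∂z̄ + π (Im τ)⁻¹ [Q, η] = 0` and `∂η/∂z − π (Im τ)⁻¹ [Q*, η] = 0`
is a constant diagonal matrix. -/
theorem kernel_of_flat_diagonal_connection
    (n : ℕ) (hn : 1 ≤ n) (τ : ℂ) (hτ : 0 < τ.im)
    (q : Fin n → ℂ)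
    (hq : ∀ i j : Fin n, i ≠ j → ∀ m l : ℤ, q i - q j ≠ (m : ℂ) + (l : ℂ) * τ)
    (η : ℂ → Matrix (Fin n) (Fin n) ℂ)
    (hsmooth : ∀ i j, ContDiff ℝ (⊤ : ℕ∞) (fun z => η z i j))
    (hper1 : ∀ z, η (z + 1) = η z)
    (hperτ : ∀ z, η (z + τ) = η z)
    (heq1 : ∀ (z : ℂ) (i j : Fin n),
      wirtingerZBar (fun w => η w i j) z +
        ((Real.pi : ℂ) * ((τ.im : ℂ))⁻¹) *
          ((Matrix.diagonal q * η z - η z * Matrix.diagonal q) i j) = 0)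
    (heq2 : ∀ (z : ℂ) (i j : Fin n),
      wirtingerZ (fun w => η w i j) z -
        ((Real.pi : ℂ) * ((τ.im : ℂ))⁻¹) *
          ((Matrix.diagonal (fun i => starRingEnd ℂ (q i)) * η z -
              η z * Matrix.diagonal (fun i => starRingEnd ℂ (q i))) i j) = 0) :
    ∃ d : Fin n → ℂ, ∀ z, η z = Matrix.diagonal d := by
  have hπτ : τ.im ≠ 0 := ne_of_gt hτ
  set c : ℂ := (Real.pi : ℂ) * ((τ.im : ℂ))⁻¹ with hc
  have hb : ∀ (z : ℂ) (i j : Fin n),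
      wirtingerZBar (fun w => η w i j) z = -(c * ((q i - q j) * η z i j)) := by
    intro z i j
    have h := heq1 z i j
    simp only [Matrix.sub_apply, Matrix.diagonal_mul, Matrix.mul_diagonal] at h
    linear_combination h
  have ha : ∀ (z : ℂ) (i j : Fin n),
      wirtingerZ (fun w => η w i j) z
        = c * ((starRingEnd ℂ (q i) - starRingEnd ℂ (q j)) * η z i j) := by
    intro z i j
    have h := heq2 z i j
    simp only [Matrix.sub_apply, Matrix.diagonal_mul, Matrix.mul_diagonal] at h
    linear_combination h
  have hdiff : ∀ i j, Differentiable ℝ (fun z => η z i j) :=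
    fun i j => (hsmooth i j).differentiable (by simp)
  have hdiag : ∀ (i : Fin n) (z : ℂ), η z i i = η 0 i i := by
    intro i
    apply const_of_wirtinger _ (hdiff i i)
    · intro z; rw [ha z i i]; ring
    · intro z; rw [hb z i i]; ring
  have hoff : ∀ (i j : Fin n), i ≠ j → ∀ z, η z i j = 0 := by
    intro i j hij
    set Q : ℂ := q i - q j with hQ
    set α : ℂ := c * Q with hα
    set β : ℂ := -(c * starRingEnd ℂ Q) with hβ
    set E : ℂ → ℂ := fun w => Complex.exp (α * (starRingEnd ℂ) w + β * w) with hE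
    have hEdiff := differentiable_expLin α β
    have hgd : Differentiable ℝ (fun w => η w i j * E w) := (hdiff i j).mul hEdiff
    have hg1 : ∀ z, wirtingerZ (fun w => η w i j * E w) z = 0 := by
      intro z
      rw [hE]
      rw [wirtingerZ_mul _ _ z ((hdiff i j) z) (hEdiff z), ha z i j, wirtingerZ_expLin]
      rw [hβ, hQ, map_sub]
      ring
    have hg2 : ∀ z, wirtingerZBar (fun w => η w i j * E w) z = 0 := by
      intro z
      rw [hE]
      rw [wirtingerZBar_mul _ _ z ((hdiff i j) z) (hEdiff z), hb z i j, wirtingerZBar_expLin]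
      rw [hα, hQ]
      ring
    have hgc := const_of_wirtinger _ hgd hg1 hg2
    have hE0 : E 0 = 1 := by simp [hE]
    have hg0 : ∀ z, η z i j * E z = η 0 i j := by
      intro z
      have := hgc z
      simp only [hE0, mul_one] at this
      exact this
    have hf0 : η 0 i j = 0 := by
      by_contra hne
      have e1 : η 0 i j * E 1 = η 0 i j := by
        have h := hg0 1
        have hη1 : η 1 i j = η 0 i j := by
          have h0 := hper1 0; rw [zero_add] at h0; rw [h0]
        rwa [hη1] at h
      have e2 : η 0 i j * E τ = η 0 i j := by
        have h := hg0 τ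
        have hητ : η τ i j = η 0 i j := by
          have h0 := hperτ 0; rw [zero_add] at h0; rw [h0]
        rwa [hητ] at h
      have hexp1 : E 1 = 1 := by
        apply mul_left_cancel₀ hne
        rw [mul_one]; exact e1
      have hexpτ : E τ = 1 := by
        apply mul_left_cancel₀ hne
        rw [mul_one]; exact e2
      have h1' : Complex.exp (α + β) = 1 := by
        simpa [hE] using hexp1
      have hτ' : Complex.exp (α * starRingEnd ℂ τ + β * τ) = 1 := hexpτ
      obtain ⟨nn, hnn⟩ := Complex.exp_eq_one_iff.mp h1'
      obtain ⟨mm, hmm⟩ := Complex.exp_eq_one_iff.mp hτ'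
      have k1 : Q.im = nn * τ.im := by
        apply real_eq_of_lattice τ.im hπτ Q nn
        calc (Real.pi : ℂ) * ((τ.im : ℂ))⁻¹ * (Q - starRingEnd ℂ Q) = α + β := by
              rw [hα, hβ, ← hc]; ring
          _ = nn * (2 * Real.pi * Complex.I) := hnn
      have k2 : (Q * starRingEnd ℂ τ).im = mm * τ.im := by
        apply real_eq_of_lattice τ.im hπτ _ mm
        have hcc : starRingEnd ℂ (Q * starRingEnd ℂ τ) = starRingEnd ℂ Q * τ := by
          rw [_root_.map_mul, Complex.conj_conj]
        rw [hcc]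
        calc (Real.pi : ℂ) * ((τ.im : ℂ))⁻¹ * (Q * starRingEnd ℂ τ - starRingEnd ℂ Q * τ)
              = α * starRingEnd ℂ τ + β * τ := by rw [hα, hβ, ← hc]; ring
          _ = mm * (2 * Real.pi * Complex.I) := hmm
      have k2' : Q.im * τ.re - Q.re * τ.im = mm * τ.im := by
        have h := k2
        simp only [Complex.mul_im, Complex.conj_re, Complex.conj_im] at h
        linarith
      apply hq i j hij (-mm) nn
      rw [← hQ]
      apply Complex.ext
      · have hre : Q.re * τ.im = ((-mm : ℝ) + nn * τ.re) * τ.im := by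
          linear_combination τ.re * k1 - k2'
        have := mul_right_cancel₀ hπτ hre
        simp only [Complex.add_re, Complex.mul_re, Complex.intCast_re, Complex.intCast_im]
        push_cast
        simp only [this]
        ring
      · simp only [Complex.add_im, Complex.mul_im, Complex.intCast_re, Complex.intCast_im]
        push_cast
        rw [k1]
        ring
    intro z
    have h := hg0 z
    rw [hf0, mul_eq_zero] at h
    rcases h with h | h
    · exact h
    · exact absurd h (Complex.exp_ne_zero _)
  refine ⟨fun i => η 0 i i, fun z => ?_⟩
  ext i j
  by_cases h : i = j
  · subst h
    rw [Matrix.diagonal_apply_eq]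
    exact hdiag i z
  · rw [Matrix.diagonal_apply_ne _ h]
    exact hoff i j h z
end

section
/- Let τ ∈ ℂ with Im τ > 0 and let q ∈ ℂ with q ∉ ℤ + τℤ. Suppose g : ℂ → ℂ is differentiable (as a map from ℝ² to ℂ), satisfies g(z + 1) = g(z) and g(z + τ) = g(z) for all z ∈ ℂ, and satisfies ∂g/∂z̄ = −π (Im τ)⁻¹ q g and ∂g/∂z = π (Im τ)⁻¹ q̄ g at every point of ℂ. Then g is identically zero. -/
open Complex ComplexConjugate Real

theorem fderiv_eq_wirtingerZ_smul_add_wirtingerZBar_smul_conj (f : ℂ → ℂ) (z : ℂ) :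
    fderiv ℝ f z = wirtingerZ f z • ContinuousLinearMap.id ℝ ℂ
      + wirtingerZBar f z • (conjCLE : ℂ →L[ℝ] ℂ) := by
  have h_one : fderiv ℝ f z 1 = wirtingerZ f z + wirtingerZBar f z := by
    unfold wirtingerZ wirtingerZBar
    ring
  have h_I : fderiv ℝ f z I = wirtingerZ f z * I - wirtingerZBar f z * I := by
    unfold wirtingerZ wirtingerZBar
    linear_combination (fderiv ℝ f z I) * I_sq
  refine ContinuousLinearMap.coe_injective (basisOneI.ext fun i => ?_)
  fin_cases i
  · simpa using h_one
  · simpa [sub_eq_add_neg] using h_I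

theorem eq_mul_exp_of_hasFDerivAt_eq_smul {E : Type*} [NormedAddCommGroup E] [NormedSpace ℝ E]
    {f : E → ℂ} {L : E →L[ℝ] ℂ} (hf : ∀ x, HasFDerivAt f (f x • L) x) (x : E) :
    f x = f 0 * exp (L x) := by
  have h_deriv : ∀ y, HasFDerivAt (fun y => f y * exp (-L y)) (0 : E →L[ℝ] ℂ) y := by
    intro y
    refine ((hf y).mul ((hasDerivAt_exp (-L y)).comp_hasFDerivAt y L.hasFDerivAt.neg))
      |>.congr_fderiv ?_
    ext v
    simp only [smul_neg, Function.comp_apply, Pi.neg_apply, add_apply, neg_apply, smul_apply,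
      smul_eq_mul, zero_apply]
    ring
  have h_const := is_const_of_fderiv_eq_zero (fun y => (h_deriv y).differentiableAt)
    (fun y => (h_deriv y).fderiv) x 0
  simp only [map_zero, neg_zero, Complex.exp_zero, mul_one] at h_const
  rw [← h_const, mul_assoc, ← Complex.exp_add, neg_add_cancel, Complex.exp_zero, mul_one]

theorem exists_int_eq_of_cexp_two_pi_I_mul_eq_one {x : ℝ} (hx : exp (2 * π * I * x) = 1) :
    ∃ n : ℤ, x = n := by
  obtain ⟨n, hn⟩ := exp_eq_one_iff.mp hx
  refine ⟨n, ofReal_injective ?_⟩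
  have h_ne : (2 * π * I : ℂ) ≠ 0 := by simp [pi_ne_zero, I_ne_zero]
  exact mul_left_cancel₀ h_ne (by rw [hn]; push_cast; ring)

noncomputable def flatExponent (τ q : ℂ) : ℂ →L[ℝ] ℂ :=
  ((π : ℂ) * (τ.im : ℂ)⁻¹ * conj q) • ContinuousLinearMap.id ℝ ℂ
    + (-((π : ℂ) * (τ.im : ℂ)⁻¹) * q) • (conjCLE : ℂ →L[ℝ] ℂ)

theorem flatExponent_apply (τ q ω : ℂ) :
    flatExponent τ q ω = 2 * π * I * ((conj q * ω).im / τ.im : ℝ) := by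
  have h_conj : flatExponent τ q ω = π * (τ.im : ℂ)⁻¹ * (conj q * ω - conj (conj q * ω)) := by
    simp only [flatExponent, neg_mul, add_apply, smul_apply, ContinuousLinearMap.id_apply,
      smul_eq_mul, ContinuousLinearEquiv.coe_coe, ContinuousAlgEquiv.coeCLE_apply, conjCAE_apply,
      map_mul, RingHomCompTriple.comp_apply, RingHom.id_apply]
    ring
  rw [h_conj, sub_conj]
  push_cast
  ring

theorem eq_intCast_add_intCast_mul_of_im_conj_mul_div_eq {τ q : ℂ} (hτ : τ.im ≠ 0) {m n : ℤ}
    (h_one : (conj q * 1).im / τ.im = n) (h_τ : (conj q * τ).im / τ.im = m) :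
    q = m + (-n : ℤ) * τ := by
  rw [div_eq_iff hτ] at h_one h_τ
  simp only [mul_one, conj_im, mul_im, conj_re, neg_mul] at h_one h_τ
  apply Complex.ext
  · simp only [Int.cast_neg, neg_mul, add_re, intCast_re, neg_re, mul_re, intCast_im, zero_mul,
      sub_zero]
    apply mul_right_cancel₀ hτ
    linear_combination h_τ - τ.re * h_one
  · simp only [Int.cast_neg, neg_mul, add_im, intCast_im, neg_im, mul_im, intCast_re, zero_mul,
      add_zero, zero_add]
    linarith

/-- The flat line bundle on the elliptic curve `ℂ/(ℤ + τℤ)` determined by a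
point `q` not in the lattice has no nonzero flat section: any doubly periodic
differentiable `g : ℂ → ℂ` with `∂g/∂z̄ = −π (Im τ)⁻¹ q g` and
`∂g/∂z = π (Im τ)⁻¹ q̄ g` vanishes identically. -/
theorem flat_section_of_nontrivial_line_bundle_is_zero
    (τ : ℂ) (hτ : 0 < τ.im) (q : ℂ)
    (hq : ∀ m l : ℤ, q ≠ (m : ℂ) + (l : ℂ) * τ)
    (g : ℂ → ℂ) (hdiff : Differentiable ℝ g)
    (hper1 : ∀ z, g (z + 1) = g z)
    (hperτ : ∀ z, g (z + τ) = g z)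
    (heq1 : ∀ z, wirtingerZBar g z = -((Real.pi : ℂ) * ((τ.im : ℂ))⁻¹) * q * g z)
    (heq2 : ∀ z, wirtingerZ g z = ((Real.pi : ℂ) * ((τ.im : ℂ))⁻¹) * (starRingEnd ℂ q) * g z) :
    ∀ z, g z = 0 := by
  have hg : ∀ z, g z = g 0 * exp (flatExponent τ q z) := by
    refine eq_mul_exp_of_hasFDerivAt_eq_smul fun z => (hdiff z).hasFDerivAt.congr_fderiv ?_
    rw [fderiv_eq_wirtingerZ_smul_add_wirtingerZBar_smul_conj, heq1, heq2, flatExponent,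
      smul_add, smul_smul, smul_smul]
    congr 2 <;> ring
  intro z
  by_contra hz
  have hg0 : g 0 ≠ 0 := fun h => hz (by rw [hg z, h, zero_mul])
  have h_int : ∀ ω, g ω = g 0 → ∃ n : ℤ, (conj q * ω).im / τ.im = n := by
    intro ω hω
    apply exists_int_eq_of_cexp_two_pi_I_mul_eq_one
    rw [← flatExponent_apply]
    exact (mul_right_eq_self₀.mp ((hg ω).symm.trans hω)).resolve_right hg0
  obtain ⟨n, hn⟩ := h_int 1 (by simpa using hper1 0)
  obtain ⟨m, hm⟩ := h_int τ (by simpa using hperτ 0)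
  exact hq m (-n) (eq_intCast_add_intCast_mul_of_im_conj_mul_div_eq hτ.ne' hn hm)
end

section
/- Let n ≥ 1, let τ ∈ ℂ with Im τ > 0, and let q₁, …, qₙ ∈ ℂ with qᵢ − qⱼ ∉ ℤ + τℤ for all i ≠ j. Write Q = diag(q₁, …, qₙ), P_x = π(Im τ)⁻¹(Q − Q*), and P_y = −iπ(Im τ)⁻¹(Q + Q*). Suppose u : ℂ → U(n) is a smooth map into the group of unitary n×n complex matrices satisfying u(z + 1) = u(z) = u(z + τ) for all z ∈ ℂ and fixing the flat diagonal connection under the unitary gauge action, i.e. u(z)⁻¹ P_x u(z) + u(z)⁻¹ ∂u/∂x (z) = P_x and u(z)⁻¹ P_y u(z) + u(z)⁻¹ ∂u/∂y (z) = P_y for every z ∈ ℂ. Then u is a constant diagonal unitary matrix. -/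
open Matrix

lemma exp_form_aux (f : ℂ → ℂ) (a b : ℂ) (hf : Differentiable ℝ f)
    (hx : ∀ z, fderiv ℝ f z 1 = a * f z)
    (hy : ∀ z, fderiv ℝ f z Complex.I = b * f z) (z : ℂ) :
    f z = Complex.exp ((z.re : ℂ) * a + (z.im : ℂ) * b) * f 0 := by
  set L : ℂ →L[ℝ] ℂ := Complex.reCLM.smulRight a + Complex.imCLM.smulRight b with hL
  have hLapp : ∀ w : ℂ, L w = (w.re : ℂ) * a + (w.im : ℂ) * b := by
    intro w
    simp [hL, Complex.real_smul]
  have hfder : ∀ z, fderiv ℝ f z = f z • L := by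
    intro z
    ext v
    have hv : (v.re : ℝ) • (1 : ℂ) + (v.im : ℝ) • Complex.I = v := by
      simp [Complex.real_smul, Complex.re_add_im]
    calc fderiv ℝ f z v = fderiv ℝ f z ((v.re : ℝ) • (1:ℂ) + (v.im : ℝ) • Complex.I) := by
          rw [hv]
      _ = (v.re : ℝ) • fderiv ℝ f z 1 + (v.im : ℝ) • fderiv ℝ f z Complex.I := by
          rw [map_add, (fderiv ℝ f z).map_smul, (fderiv ℝ f z).map_smul]
      _ = (f z • L) v := by
          rw [hx, hy]
          simp [hLapp, Complex.real_smul]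
          ring
  set g : ℂ → ℂ := fun w => Complex.exp (-(L w)) * f w with hg
  have hgd : ∀ w, HasFDerivAt g (0 : ℂ →L[ℝ] ℂ) w := by
    intro w
    have h1 : HasFDerivAt (fun w : ℂ => -(L w)) (-L) w := L.hasFDerivAt.neg
    have h2 := h1.cexp
    have h3 : HasFDerivAt f (f w • L) w := hfder w ▸ (hf w).hasFDerivAt
    have h4 := h2.mul h3
    have h5 : Complex.exp (-(L w)) • f w • L + f w • Complex.exp (-(L w)) • -L
        = (0 : ℂ →L[ℝ] ℂ) := by
      ext v
      simp [smul_smul]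
      ring
    rwa [h5] at h4
  have hconst : g z = g 0 :=
    is_const_of_fderiv_eq_zero (fun x => (hgd x).differentiableAt) (fun x => (hgd x).fderiv) z 0
  have hg0 : g 0 = f 0 := by simp [hg]
  have : Complex.exp (L z) * g z = f z := by
    rw [hg, ← mul_assoc, ← Complex.exp_add]
    simp
  rw [← this, hconst, hg0, hLapp]

/-- Stabilizer computation from Section 9 of the paper: a smooth doubly periodic
unitary gauge transformation `u` on the elliptic curve `ℂ/(ℤ + τℤ)` that fixes
the flat diagonal connection `A₀ = π (Im τ)⁻¹ (Q dz̄ − Q* dz)` (whose values on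
`∂/∂x` and `∂/∂y` are `P_x` and `P_y`), where the points `q₁, …, qₙ` are
pairwise distinct modulo the lattice, is a constant diagonal unitary matrix. -/
theorem gauge_stabilizer_of_flat_diagonal_connection
    (n : ℕ) (hn : 1 ≤ n) (τ : ℂ) (hτ : 0 < τ.im)
    (q : Fin n → ℂ)
    (hq : ∀ i j : Fin n, i ≠ j → ∀ m l : ℤ, q i - q j ≠ (m : ℂ) + (l : ℂ) * τ)
    (u : ℂ → Matrix (Fin n) (Fin n) ℂ)
    (hsmooth : ∀ i j, ContDiff ℝ (⊤ : ℕ∞) (fun z => u z i j))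
    (hunitary : ∀ z, (u z)ᴴ * u z = 1 ∧ u z * (u z)ᴴ = 1)
    (hper1 : ∀ z, u (z + 1) = u z)
    (hperτ : ∀ z, u (z + τ) = u z)
    (hgaugex : ∀ z : ℂ,
      (u z)⁻¹ * (((Real.pi : ℂ) * ((τ.im : ℂ))⁻¹) •
          (Matrix.diagonal q - (Matrix.diagonal q)ᴴ)) * u z +
        (u z)⁻¹ * (Matrix.of fun i j => fderiv ℝ (fun w => u w i j) z 1) =
      ((Real.pi : ℂ) * ((τ.im : ℂ))⁻¹) •
          (Matrix.diagonal q - (Matrix.diagonal q)ᴴ))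
    (hgaugey : ∀ z : ℂ,
      (u z)⁻¹ * ((-Complex.I * (Real.pi : ℂ) * ((τ.im : ℂ))⁻¹) •
          (Matrix.diagonal q + (Matrix.diagonal q)ᴴ)) * u z +
        (u z)⁻¹ * (Matrix.of fun i j => fderiv ℝ (fun w => u w i j) z Complex.I) =
      (-Complex.I * (Real.pi : ℂ) * ((τ.im : ℂ))⁻¹) •
          (Matrix.diagonal q + (Matrix.diagonal q)ᴴ)) :
    ∃ d : Fin n → ℂ, (∀ i, ‖d i‖ = 1) ∧ ∀ z, u z = Matrix.diagonal d := by

  have hT : ((τ.im : ℂ)) ≠ 0 := by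
    exact_mod_cast hτ.ne'
  have hπ : ((Real.pi : ℂ)) ≠ 0 := by
    exact_mod_cast Real.pi_ne_zero
  have hInv : ∀ z, (u z)⁻¹ = (u z)ᴴ := fun z => Matrix.inv_eq_left_inv (hunitary z).1
  set v : Fin n → ℂ :=
    fun k => (Real.pi : ℂ) * ((τ.im : ℂ))⁻¹ * (q k - (starRingEnd ℂ) (q k)) with hv
  set w : Fin n → ℂ :=
    fun k => -Complex.I * (Real.pi : ℂ) * ((τ.im : ℂ))⁻¹ * (q k + (starRingEnd ℂ) (q k)) with hw
  have hA : ((Real.pi : ℂ) * ((τ.im : ℂ))⁻¹) • (Matrix.diagonal q - (Matrix.diagonal q)ᴴ)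
      = Matrix.diagonal v := by
    rw [Matrix.diagonal_conjTranspose, Matrix.diagonal_sub]
    ext i j
    rcases eq_or_ne i j with rfl | hij
    · simp [hv]
    · simp [Matrix.diagonal_apply_ne _ hij]
  have hB : ((-Complex.I * (Real.pi : ℂ) * ((τ.im : ℂ))⁻¹)) •
        (Matrix.diagonal q + (Matrix.diagonal q)ᴴ) = Matrix.diagonal w := by
    rw [Matrix.diagonal_conjTranspose, Matrix.diagonal_add]
    ext i j
    rcases eq_or_ne i j with rfl | hij
    · simp [hw]
    · simp [Matrix.diagonal_apply_ne _ hij]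
  -- entrywise derivative equations
  have hx : ∀ i j z, fderiv ℝ (fun z => u z i j) z 1 = (v j - v i) * u z i j := by
    intro i j z
    have h := hgaugex z
    rw [hInv, hA] at h
    have h2 := congrArg (fun M => u z * M) h
    simp only [Matrix.mul_add, ← Matrix.mul_assoc, (hunitary z).2, Matrix.one_mul] at h2
    have h3 := congrArg (fun M => M i j) h2
    simp only [Matrix.add_apply, Matrix.mul_diagonal, Matrix.diagonal_mul, Matrix.of_apply] at h3
    linear_combination h3
  have hy : ∀ i j z, fderiv ℝ (fun z => u z i j) z Complex.I = (w j - w i) * u z i j := by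
    intro i j z
    have h := hgaugey z
    rw [hInv, hB] at h
    have h2 := congrArg (fun M => u z * M) h
    simp only [Matrix.mul_add, ← Matrix.mul_assoc, (hunitary z).2, Matrix.one_mul] at h2
    have h3 := congrArg (fun M => M i j) h2
    simp only [Matrix.add_apply, Matrix.mul_diagonal, Matrix.diagonal_mul, Matrix.of_apply] at h3
    linear_combination h3
  have key : ∀ i j z, u z i j =
      Complex.exp ((z.re : ℂ) * (v j - v i) + (z.im : ℂ) * (w j - w i)) * u 0 i j := by
    intro i j z
    exact exp_form_aux (fun z => u z i j) (v j - v i) (w j - w i)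
      ((hsmooth i j).differentiable (by simp)) (hx i j) (hy i j) z
  -- off-diagonal entries vanish
  have hoff : ∀ i j, i ≠ j → u 0 i j = 0 := by
    intro i j hij
    by_contra h0
    have e1 : Complex.exp (v j - v i) = 1 := by
      have h1 : u (0 + 1) i j = u 0 i j := by rw [hper1]
      rw [zero_add, key i j 1] at h1
      simp only [Complex.one_re, Complex.one_im, Complex.ofReal_one, Complex.ofReal_zero,
        one_mul, zero_mul, add_zero] at h1
      nth_rewrite 2 [← one_mul (u 0 i j)] at h1
      exact mul_right_cancel₀ h0 h1
    have e2 : Complex.exp ((τ.re : ℂ) * (v j - v i) + (τ.im : ℂ) * (w j - w i)) = 1 := by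
      have h1 : u (0 + τ) i j = u 0 i j := by rw [hperτ]
      rw [zero_add, key i j τ] at h1
      nth_rewrite 2 [← one_mul (u 0 i j)] at h1
      exact mul_right_cancel₀ h0 h1
    obtain ⟨m, hm⟩ := Complex.exp_eq_one_iff.mp e1
    obtain ⟨l, hl⟩ := Complex.exp_eq_one_iff.mp e2
    apply hq i j hij l (-m)
    have hτeq : (τ.re : ℂ) + (τ.im : ℂ) * Complex.I = τ := Complex.re_add_im τ
    rw [hv] at hm hl
    rw [hw] at hl
    simp only at hm hl
    field_simp at hm hl
    have hne : (2 * (Real.pi : ℂ) * ((τ.im : ℂ)) ^ 3) ≠ 0 :=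
      mul_ne_zero (mul_ne_zero two_ne_zero hπ) (pow_ne_zero _ hT)
    refine mul_left_cancel₀ hne ?_
    push_cast
    linear_combination (Real.pi : ℂ) * (-((τ.im : ℂ)) ^ 3 + Complex.I * (τ.re : ℂ) * ((τ.im : ℂ)) ^ 2) * hm +
      (-Complex.I * (Real.pi : ℂ) * ((τ.im : ℂ)) ^ 2) * hl + (-(2 * (Real.pi : ℂ) * ((τ.im : ℂ)) ^ 3) * (m : ℂ)) * hτeq +
      ((Real.pi : ℂ) * ((τ.im : ℂ)) ^ 3 * (q i - q j + 2 * (τ.re : ℂ) * (m : ℂ) - 2 * (l : ℂ) +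
        (starRingEnd ℂ) (q i) - (starRingEnd ℂ) (q j))) * Complex.I_sq
  -- diagonal entries constant
  have hdiag : ∀ i z, u z i i = u 0 i i := by
    intro i z
    rw [key i i z]
    simp
  refine ⟨fun i => u 0 i i, ?_, ?_⟩
  · intro i
    have h1 := congrArg (fun M => M i i) (hunitary 0).1
    simp only [Matrix.mul_apply, Matrix.conjTranspose_apply, Matrix.one_apply_eq] at h1
    rw [Finset.sum_eq_single i (fun k _ hk => by rw [hoff k i hk]; simp) (by simp)] at h1
    have h2 : (Complex.normSq (u 0 i i) : ℂ) = 1 := by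
      rw [Complex.normSq_eq_conj_mul_self]
      exact h1
    have h3 : Complex.normSq (u 0 i i) = 1 := by exact_mod_cast h2
    show ‖u 0 i i‖ = 1
    rw [Complex.norm_def, h3, Real.sqrt_one]
  · intro z
    ext i j
    rcases eq_or_ne i j with rfl | hij
    · rw [Matrix.diagonal_apply_eq]
      exact hdiag i z
    · rw [Matrix.diagonal_apply_ne _ hij, key i j z, hoff i j hij, mul_zero]
end
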